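/- Partial-trace identity: let T: ℝ^n → ℝ^m be determined by a function J: {1,…,m} → {1,…,n} via (Tx)_i = x_{J(i)} (i.e., T e_j = Σ_{i: J(i)=j} e_i). Then for every multi-index α ∈ ℕ^m with |α| < N and every x ∈ ℝ^n, p_α^{μ_T}(Tx) = p_{Tᵗα}^μ(x), where (Tᵗα)_j = Σ_{i: J(i)=j} α_i. -/

import Mathlib

open MeasureTheory MvPolynomial

noncomputable section

def mdeg {ι : Type*} [Fintype ι] (β : ι →₀ ℕ) : ℕ := ∑ i, β i

def IsSegalFamily {ι : Type*} [Fintype ι] [DecidableEq ι]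
    (μ : Measure (ι → ℝ)) (N : ℕ∞)
    (p : (ι →₀ ℕ) → MvPolynomial ι ℝ) : Prop :=
  p 0 = 1 ∧
  (∀ β : ι →₀ ℕ, (mdeg β : ℕ∞) < N → ∀ j : ι,
      pderiv j (p β) = (β j : ℝ) • p (β - Finsupp.single j 1)) ∧
  (∀ β : ι →₀ ℕ, 0 < mdeg β → (mdeg β : ℕ∞) < N → ∫ x, eval x (p β) ∂μ = 0)

def HasMoments {ι : Type*} [Fintype ι] (μ : Measure (ι → ℝ)) (N : ℕ∞) : Prop :=
  ∀ k : ℕ, (k : ℕ∞) < N → Integrable (fun x : ι → ℝ => (∑ i, |x i|) ^ k) μ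


/-! Renaming variables along `J` turns `p_α^{μ_T}` into a polynomial on `ℝ^n`. By the Segal
recursion, the chain rule `∂_j (q ∘ T) = ∑_{J i = j} (∂_i q) ∘ T` and induction on `|α|`, its
`j`-th partial derivative is `(Tᵗα)_j p_{Tᵗα - e_j}^μ = ∂_j p_{Tᵗα}^μ`, so the two sides differ by
a constant. Both have `μ`-integral zero (the left one because `∫ q ∘ T dμ = ∫ q dμ_T`), and
`p_{Tᵗα}^μ` is integrable since it has degree at most `|α|` and `μ` has moments of that order;
hence the constant vanishes. -/

namespace MvPolynomial

variable {R σ : Type*}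

theorem pderiv_ext [CommRing R] [IsAddTorsionFree R] {f g : MvPolynomial σ R}
    (hD : ∀ i, pderiv i f = pderiv i g) (hc : constantCoeff f = constantCoeff g) : f = g := by
  refine coe_injective σ R (MvPowerSeries.pderiv.ext (fun i => ?_) ?_)
  · simp only [MvPowerSeries.pderiv_coe, hD]
  · simpa [← MvPowerSeries.coeff_zero_eq_constantCoeff_apply, constantCoeff_eq] using hc

theorem eq_add_C_of_pderiv_eq [CommRing R] [IsAddTorsionFree R] {f g : MvPolynomial σ R}
    (hD : ∀ i, pderiv i f = pderiv i g) : f = g + C (constantCoeff f - constantCoeff g) :=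
  pderiv_ext (fun i => by simp [hD]) (by simp)

theorem totalDegree_le_succ_of_pderiv [CommRing R] [IsDomain R] [CharZero R]
    {f : MvPolynomial σ R} {d : ℕ} (h : ∀ i, (pderiv i f).totalDegree ≤ d) :
    f.totalDegree ≤ d + 1 := by
  refine Finset.sup_le fun m hm => ?_
  obtain rfl | ⟨i, hi⟩ := eq_or_ne m 0 |>.imp id Finsupp.ne_iff.mp
  · simp
  have hle : Finsupp.single i 1 ≤ m := Finsupp.single_le_iff.2 (Nat.one_le_iff_ne_zero.2 hi)
  have hcoeff : coeff (m - Finsupp.single i 1) (pderiv i f) ≠ 0 := by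
    rw [coeff_pderiv, tsub_add_cancel_of_le hle]
    exact mul_ne_zero (mem_support_iff.1 hm) (Nat.cast_add_one_ne_zero _)
  have hdeg := (le_totalDegree (mem_support_iff.2 hcoeff)).trans (h i)
  have hsplit := congrArg Finsupp.degree (tsub_add_cancel_of_le hle)
  rw [map_add, Finsupp.degree_single] at hsplit
  change (m - Finsupp.single i 1).degree ≤ d at hdeg
  change m.degree ≤ d + 1
  omega

theorem pderiv_rename_eq_sum [CommSemiring R] {τ : Type*} [Fintype σ] [DecidableEq τ]
    (J : σ → τ) (j : τ) (q : MvPolynomial σ R) :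
    pderiv j (rename J q) = ∑ i with J i = j, rename J (pderiv i q) := by
  classical
  induction q using MvPolynomial.induction_on with
  | C a => simp
  | add f g hf hg => simp [hf, hg, Finset.sum_add_distrib]
  | mul_X f i hf =>
    simp only [Derivation.leibniz, map_mul, rename_X, pderiv_X, hf, smul_eq_mul, map_add,
      Finset.sum_add_distrib, Finset.mul_sum, Pi.single_apply]
    congr 1
    by_cases h : J i = j <;> simp [h, Finset.sum_ite_eq]

end MvPolynomial

section Multiindex

variable {ι κ : Type*}

theorem mdeg_eq_degree [Fintype ι] (β : ι →₀ ℕ) : mdeg β = β.degree :=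
  (Finsupp.degree_eq_sum β).symm

theorem mdeg_sub_single_add_one [Fintype ι] {β : ι →₀ ℕ} {j : ι} (hj : β j ≠ 0) :
    mdeg (β - Finsupp.single j 1) + 1 = mdeg β := by
  have hle : Finsupp.single j 1 ≤ β := Finsupp.single_le_iff.2 (Nat.one_le_iff_ne_zero.2 hj)
  simpa only [mdeg_eq_degree, map_add, Finsupp.degree_single]
    using congrArg Finsupp.degree (tsub_add_cancel_of_le hle)

theorem mdeg_mapDomain [Fintype ι] [Fintype κ] (J : κ → ι) (α : κ →₀ ℕ) :
    mdeg (α.mapDomain J) = mdeg α := by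
  simp only [mdeg_eq_degree, Finsupp.degree_mapDomain]

theorem mapDomain_sub_single [DecidableEq κ] (J : κ → ι) {α : κ →₀ ℕ} {i : κ} (hi : α i ≠ 0) :
    (α - Finsupp.single i 1).mapDomain J = α.mapDomain J - Finsupp.single (J i) 1 := by
  have hle : Finsupp.single i 1 ≤ α := Finsupp.single_le_iff.2 (Nat.one_le_iff_ne_zero.2 hi)
  conv_rhs => rw [← tsub_add_cancel_of_le hle, Finsupp.mapDomain_add, Finsupp.mapDomain_single]
  exact (add_tsub_cancel_right _ _).symm

theorem mapDomain_apply_eq_sum_filter [Fintype κ] [DecidableEq ι] (J : κ → ι) (α : κ →₀ ℕ)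
    (j : ι) :
    α.mapDomain J j = ∑ i with J i = j, α i := by
  rw [Finsupp.mapDomain, Finsupp.sum_apply, Finsupp.sum_fintype _ _ (fun _ => by simp)]
  simp only [Finsupp.single_apply, Finset.sum_filter]

theorem mdeg_lt_induction [Fintype ι] {N : ℕ∞} {P : (ι →₀ ℕ) → Prop} (zero : P 0)
    (step : ∀ β, 0 < mdeg β → (mdeg β : ℕ∞) < N →
      (∀ j, β j ≠ 0 → P (β - Finsupp.single j 1)) → P β)
    {β : ι →₀ ℕ} (hβ : (mdeg β : ℕ∞) < N) : P β := by
  induction hd : mdeg β generalizing β with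
  | zero => rwa [(Finsupp.degree_eq_zero_iff β).1 (by rwa [← mdeg_eq_degree])]
  | succ d ih =>
    refine step β (by omega) hβ fun j hj => ?_
    have hsub := mdeg_sub_single_add_one hj
    have hle : mdeg (β - Finsupp.single j 1) ≤ mdeg β := by omega
    exact ih (lt_of_le_of_lt (by exact_mod_cast hle) hβ) (by omega)

end Multiindex

section Moments

variable {ι : Type*} [Fintype ι] {μ : Measure (ι → ℝ)} {N : ℕ∞}

theorem abs_prod_pow_le_sum_abs_pow_degree (x : ι → ℝ) (m : ι →₀ ℕ) :
    |∏ i ∈ m.support, x i ^ m i| ≤ (∑ i, |x i|) ^ m.degree := by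
  rw [Finset.abs_prod, Finsupp.degree_apply, ← Finset.prod_pow_eq_pow_sum]
  refine Finset.prod_le_prod (fun _ _ => abs_nonneg _) fun i _ => ?_
  rw [abs_pow]
  exact pow_le_pow_left₀ (abs_nonneg _)
    (Finset.single_le_sum (fun j _ => abs_nonneg (x j)) (Finset.mem_univ i)) _

theorem HasMoments.integrable_eval (hmom : HasMoments μ N) {f : MvPolynomial ι ℝ}
    (hf : (f.totalDegree : ℕ∞) < N) : Integrable (fun x => eval x f) μ := by
  simp only [eval_eq]
  refine integrable_finsetSum _ fun m hm => (Integrable.const_mul ?_ _)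
  have hm : (m.degree : ℕ∞) < N := lt_of_le_of_lt (by exact_mod_cast le_totalDegree hm) hf
  refine (hmom _ hm).mono' (by fun_prop : Continuous _).aestronglyMeasurable
    (ae_of_all _ fun x => ?_)
  rw [Real.norm_eq_abs]
  exact abs_prod_pow_le_sum_abs_pow_degree x m

end Moments

theorem integral_eval_rename {ι κ : Type*} [Fintype κ] (μ : Measure (ι → ℝ)) (J : κ → ι)
    (q : MvPolynomial κ ℝ) :
    ∫ x, eval x (rename J q) ∂μ = ∫ y, eval y q ∂(μ.map fun x i => x (J i)) := by
  have hT : Measurable fun (x : ι → ℝ) i => x (J i) :=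
    measurable_pi_lambda _ fun i => measurable_pi_apply (J i)
  rw [integral_map hT.aemeasurable (continuous_eval q).aestronglyMeasurable]
  simp only [eval_rename, Function.comp_def]

theorem eq_of_pderiv_eq_of_integral_eq {ι : Type*} {μ : Measure (ι → ℝ)} [IsFiniteMeasure μ]
    [NeZero μ] {f g : MvPolynomial ι ℝ} (hg : Integrable (fun x => eval x g) μ)
    (hD : ∀ i, pderiv i f = pderiv i g) (hI : ∫ x, eval x f ∂μ = ∫ x, eval x g ∂μ) : f = g := by
  have hfg := eq_add_C_of_pderiv_eq hD
  set c := constantCoeff f - constantCoeff g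
  have hc : c = 0 := by
    rw [hfg] at hI
    simpa [integral_add hg (integrable_const c), measureReal_univ_ne_zero] using hI
  rw [hfg, hc, C_0, add_zero]

namespace IsSegalFamily

variable {ι : Type*} [Fintype ι] [DecidableEq ι] {μ : Measure (ι → ℝ)} {N : ℕ∞}
  {p : (ι →₀ ℕ) → MvPolynomial ι ℝ}

theorem apply_zero (hp : IsSegalFamily μ N p) : p 0 = 1 := hp.1

theorem pderiv_eq (hp : IsSegalFamily μ N p) {β : ι →₀ ℕ} (hβ : (mdeg β : ℕ∞) < N) (j : ι) :
    MvPolynomial.pderiv j (p β) = (β j : ℝ) • p (β - Finsupp.single j 1) :=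
  hp.2.1 β hβ j

theorem integral_eq_zero (hp : IsSegalFamily μ N p) {β : ι →₀ ℕ} (hβ₀ : 0 < mdeg β)
    (hβ : (mdeg β : ℕ∞) < N) : ∫ x, eval x (p β) ∂μ = 0 :=
  hp.2.2 β hβ₀ hβ

theorem totalDegree_le (hp : IsSegalFamily μ N p) {β : ι →₀ ℕ} (hβ : (mdeg β : ℕ∞) < N) :
    (p β).totalDegree ≤ mdeg β := by
  refine mdeg_lt_induction (P := fun β => (p β).totalDegree ≤ mdeg β) (by simp [hp.apply_zero])
    (fun β hpos hβ ih => ?_) hβ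
  obtain ⟨d, hd⟩ : ∃ d, mdeg β = d + 1 := ⟨mdeg β - 1, by omega⟩
  rw [hd]
  refine totalDegree_le_succ_of_pderiv fun j => ?_
  rw [hp.pderiv_eq hβ j]
  by_cases hj : β j = 0
  · simp [hj]
  · have := mdeg_sub_single_add_one hj
    exact (totalDegree_smul_le _ _).trans ((ih j hj).trans (by omega))

theorem integrable_eval (hp : IsSegalFamily μ N p) (hmom : HasMoments μ N) {β : ι →₀ ℕ}
    (hβ : (mdeg β : ℕ∞) < N) : Integrable (fun x => eval x (p β)) μ :=
  hmom.integrable_eval (lt_of_le_of_lt (by exact_mod_cast hp.totalDegree_le hβ) hβ)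

theorem rename_eq_mapDomain [IsFiniteMeasure μ] [NeZero μ] (hp : IsSegalFamily μ N p)
    (hmom : HasMoments μ N) {κ : Type*} [Fintype κ] [DecidableEq κ] (J : κ → ι)
    {pT : (κ →₀ ℕ) → MvPolynomial κ ℝ} (hpT : IsSegalFamily (μ.map fun x i => x (J i)) N pT)
    {α : κ →₀ ℕ} (hα : (mdeg α : ℕ∞) < N) : rename J (pT α) = p (α.mapDomain J) := by
  refine mdeg_lt_induction (P := fun α => rename J (pT α) = p (α.mapDomain J))
    (by simp [hp.apply_zero, hpT.apply_zero]) (fun α hpos hα ih => ?_) hα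
  set γ := α.mapDomain J
  have hγ : (mdeg γ : ℕ∞) < N := by rwa [mdeg_mapDomain]
  refine eq_of_pderiv_eq_of_integral_eq (hp.integrable_eval hmom hγ) (fun j => ?_) ?_
  · calc MvPolynomial.pderiv j (rename J (pT α))
        = ∑ i with J i = j, rename J (MvPolynomial.pderiv i (pT α)) :=
          pderiv_rename_eq_sum J j _
      _ = ∑ i with J i = j, (α i : ℝ) • p (γ - Finsupp.single j 1) := by
          refine Finset.sum_congr rfl fun i hi => ?_
          rw [hpT.pderiv_eq hα i, map_smul]
          by_cases hαi : α i = 0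
          · simp [hαi]
          · rw [ih i hαi, mapDomain_sub_single J hαi, (Finset.mem_filter.1 hi).2]
      _ = (γ j : ℝ) • p (γ - Finsupp.single j 1) := by
          rw [← Finset.sum_smul, mapDomain_apply_eq_sum_filter, Nat.cast_sum]
      _ = MvPolynomial.pderiv j (p γ) := (hp.pderiv_eq hγ j).symm
  · rw [integral_eval_rename, hpT.integral_eq_zero hpos hα,
      hp.integral_eq_zero (by rwa [mdeg_mapDomain]) hγ]

end IsSegalFamily

theorem segal_partial_trace {n m : ℕ} (μ : Measure (Fin n → ℝ)) [IsProbabilityMeasure μ]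
    (N : ℕ∞) (hmom : HasMoments μ N) (J : Fin m → Fin n)
    (p : (Fin n →₀ ℕ) → MvPolynomial (Fin n) ℝ)
    (pT : (Fin m →₀ ℕ) → MvPolynomial (Fin m) ℝ)
    (hp : IsSegalFamily μ N p)
    (hpT : IsSegalFamily (μ.map (fun x (i : Fin m) => x (J i))) N pT)
    (α : Fin m →₀ ℕ) (hα : (mdeg α : ℕ∞) < N) (x : Fin n → ℝ) :
    eval (fun i => x (J i)) (pT α) = eval x (p (α.mapDomain J)) := by
  rw [← hp.rename_eq_mapDomain hmom J hpT hα, eval_rename]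
  rfl

end
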